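/- Let q(d) = (2/3)·∑_{k=0}^{d−2} binom(d−1+k, k)·(1/3)^{d−1+k} + binom(2d−2, d−1)·(1/3)^{2d−1} for integers d ≥ 1 (with the first sum empty when d = 1). Then the series ∑_{d=1}^∞ d·q(d) converges and equals 2 + √5/5. -/

import Mathlib

/-- `q d` is the probability that the vertical distance between two consecutive
particles deposited at the center site equals `d` (for `d ≥ 1`), in the
three-site multilayer parking model with screening. -/
noncomputable def parkingGap (d : ℕ) : ℝ :=
  (2/3) * ∑ k ∈ Finset.range (d - 1), ((d - 1 + k).choose k : ℝ) * (1/3) ^ (d - 1 + k)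
    + ((2 * d - 2).choose (d - 1) : ℝ) * (1/3) ^ (2 * d - 1)

/-!
Write `w(n, k) = C(n+k, k) x^(n+k)` (`pathWeight`) with `x = 1/3`. The mean is
`(2/3) L + (1/3) Δ`, where `L` sums `(n+1) w(n, k)` over `k < n` and `Δ` over the diagonal.
Over the whole quadrant the rows are negative binomial series, giving `T = (1-x)/(1-2x)² = 6`;
reflecting the upper triangle `U` onto the lower one turns `T = L + U + Δ` and
`L - U = ∑_{k<n} (n-k) w(n, k)` into a formula for `L`. Along the antidiagonal `n + k = m` the
weights `(m - 2k) C(m, k)` telescope to `m C(m-1, ⌊(m-1)/2⌋)`, so everything reduces to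
`∑ C(2n, n) yⁿ = 1/√(1-4y)` and `∑ n C(2n, n) yⁿ` at `y = 1/9`. The first comes from the Catalan
equation `y S² = S - 1` and `C(2n+2, n+1) = 4 C(2n, n) - 2 Catₙ`.
-/

open Finset Nat

lemma sum_range_mul_sub_two_mul_choose (M t : ℕ) :
    ∑ k ∈ range (t + 1), ((M : ℝ) + 1 - 2 * k) * (M + 1).choose k = (M + 1) * M.choose t := by
  induction t with
  | zero => simp
  | succ t ih =>
    rw [sum_range_succ, ih]
    have hpascal := congrArg (Nat.cast : ℕ → ℝ) (choose_succ_succ' M t)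
    have habsorb := congrArg (Nat.cast : ℕ → ℝ) (add_one_mul_choose_eq M t)
    push_cast at hpascal habsorb ⊢
    linear_combination 2 * habsorb + ((M : ℝ) + 1) * hpascal

lemma centralBinom_succ_eq_two_mul_choose (n : ℕ) :
    centralBinom (n + 1) = 2 * (2 * n + 1).choose n := by
  rw [centralBinom_eq_two_mul_choose, show 2 * (n + 1) = 2 * n + 1 + 1 by ring,
    choose_succ_succ', choose_symm_half]
  ring

section CentralBinomSeries

variable {x : ℝ}

lemma catalan_le_centralBinom (n : ℕ) : catalan n ≤ centralBinom n := by
  rw [← succ_mul_catalan_eq_centralBinom]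
  exact Nat.le_mul_of_pos_left _ n.succ_pos

lemma centralBinom_succ_add_two_mul_catalan (n : ℕ) :
    centralBinom (n + 1) + 2 * catalan n = 4 * centralBinom n := by
  refine Nat.eq_of_mul_eq_mul_left n.succ_pos ?_
  calc (n + 1) * (centralBinom (n + 1) + 2 * catalan n)
      = (n + 1) * centralBinom (n + 1) + 2 * ((n + 1) * catalan n) := by ring
    _ = (n + 1) * (4 * centralBinom n) := by
      rw [succ_mul_centralBinom_succ, succ_mul_catalan_eq_centralBinom]; ring

lemma summable_pow_mul_centralBinom_mul_pow (k : ℕ) (hx₀ : 0 ≤ x) (hx : x < 1 / 4) :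
    Summable fun n : ℕ => (n : ℝ) ^ k * centralBinom n * x ^ n := by
  have h4x : ‖4 * x‖ < 1 := by rw [Real.norm_of_nonneg (by positivity)]; linarith
  refine (summable_pow_mul_geometric_of_norm_lt_one k h4x).of_nonneg_of_le
    (fun n => by positivity) fun n => ?_
  rw [mul_pow, mul_assoc]
  gcongr
  exact_mod_cast centralBinom_le_four_pow n

lemma summable_centralBinom_mul_pow (hx₀ : 0 ≤ x) (hx : x < 1 / 4) :
    Summable fun n : ℕ => (centralBinom n : ℝ) * x ^ n := by
  simpa using summable_pow_mul_centralBinom_mul_pow 0 hx₀ hx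

lemma summable_catalan_mul_pow (hx₀ : 0 ≤ x) (hx : x < 1 / 4) :
    Summable fun n : ℕ => (catalan n : ℝ) * x ^ n :=
  (summable_centralBinom_mul_pow hx₀ hx).of_nonneg_of_le (fun n => by positivity)
    fun n => by gcongr; exact_mod_cast catalan_le_centralBinom n

lemma mul_tsum_catalan_mul_pow_sq (hx₀ : 0 ≤ x) (hx : x < 1 / 4) :
    x * (∑' n, (catalan n : ℝ) * x ^ n) ^ 2 = ∑' n, (catalan n : ℝ) * x ^ n - 1 := by
  set c : ℕ → ℝ := fun n => (catalan n : ℝ) * x ^ n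
  have hc := summable_catalan_mul_pow hx₀ hx
  have hnorm : Summable fun n => ‖c n‖ := hc.norm
  have hconv : ∀ n, ∑ k ∈ range (n + 1), c k * c (n - k) = (catalan (n + 1) : ℝ) * x ^ n := by
    intro n
    rw [catalan_succ', Nat.sum_antidiagonal_eq_sum_range_succ_mk, Nat.cast_sum, sum_mul]
    refine sum_congr rfl fun k hk => ?_
    rw [mul_mul_mul_comm, ← pow_add, Nat.add_sub_cancel' (Nat.lt_succ_iff.1 (mem_range.1 hk))]
    push_cast; rfl
  have hprod := (hasSum_sum_range_mul_of_summable_norm hnorm hnorm).mul_left x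
  simp only [hconv] at hprod
  have hshift := (hasSum_nat_add_iff' 1).2 hc.hasSum
  simp only [sum_range_one, catalan_zero, Nat.cast_one, pow_zero, mul_one] at hshift
  rw [sq]
  refine hprod.unique (hshift.congr_fun fun n => ?_)
  ring

lemma hasSum_centralBinom_mul_pow (hx₀ : 0 ≤ x) (hx : x < 1 / 4) :
    HasSum (fun n : ℕ => (centralBinom n : ℝ) * x ^ n) (√(1 - 4 * x))⁻¹ := by
  obtain ⟨S, hS⟩ := summable_catalan_mul_pow hx₀ hx
  obtain ⟨B, hB⟩ := summable_centralBinom_mul_pow hx₀ hx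
  have hrec (n : ℕ) : (centralBinom (n + 1) : ℝ) * x ^ (n + 1)
      = 4 * x * (centralBinom n * x ^ n) - 2 * x * (catalan n * x ^ n) := by
    have := congrArg (Nat.cast : ℕ → ℝ) (centralBinom_succ_add_two_mul_catalan n)
    push_cast at this
    linear_combination x ^ (n + 1) * this
  have hlin : B - 1 = 4 * x * B - 2 * x * S := by
    have hshift := (hasSum_nat_add_iff' 1).2 hB
    simp only [sum_range_one, centralBinom_zero, Nat.cast_one, pow_zero, mul_one] at hshift
    exact hshift.unique (((hB.mul_left (4 * x)).sub (hS.mul_left (2 * x))).congr_fun hrec)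
  have hquad := mul_tsum_catalan_mul_pow_sq hx₀ hx
  rw [hS.tsum_eq] at hquad
  have hsq : √(1 - 4 * x) ^ 2 = 1 - 4 * x := Real.sq_sqrt (by linarith)
  have hpos : 0 < √(1 - 4 * x) := Real.sqrt_pos.2 (by linarith)
  have hB₀ : 0 ≤ B := hB.nonneg fun n => by positivity
  -- squaring `(1 - 4x) B = 1 - 2xS` eliminates `S`; then `B ≥ 0` picks the root
  have hB₂ : (1 - 4 * x) * ((√(1 - 4 * x) * B) ^ 2 - 1) = 0 := by
    linear_combination ((1 - 4 * x) * B + 1 - 2 * x * S) * hlin + 4 * x * hquad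
      + (1 - 4 * x) * B ^ 2 * hsq
  have hroot : √(1 - 4 * x) * B = 1 := by
    have := (mul_eq_zero.1 hB₂).resolve_left (by linarith)
    nlinarith [mul_nonneg hpos.le hB₀]
  rwa [← eq_inv_of_mul_eq_one_right hroot]

lemma hasSum_mul_centralBinom_mul_pow (hx₀ : 0 ≤ x) (hx : x < 1 / 4) :
    HasSum (fun n : ℕ => (n : ℝ) * centralBinom n * x ^ n)
      (2 * x / (1 - 4 * x) * (√(1 - 4 * x))⁻¹) := by
  obtain ⟨D, hD⟩ : Summable fun n : ℕ => (n : ℝ) * centralBinom n * x ^ n := by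
    simpa using summable_pow_mul_centralBinom_mul_pow 1 hx₀ hx
  have hrec (n : ℕ) : ((n + 1 : ℕ) : ℝ) * centralBinom (n + 1) * x ^ (n + 1)
      = 4 * x * (n * centralBinom n * x ^ n) + 2 * x * (centralBinom n * x ^ n) := by
    have := congrArg (Nat.cast : ℕ → ℝ) (succ_mul_centralBinom_succ n)
    push_cast at this ⊢
    linear_combination x ^ (n + 1) * this
  have hlin : D = 4 * x * D + 2 * x * (√(1 - 4 * x))⁻¹ := by
    have hshift := (hasSum_nat_add_iff' 1).2 hD
    simp only [sum_range_one, Nat.cast_zero, zero_mul, sub_zero] at hshift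
    exact hshift.unique (((hD.mul_left (4 * x)).add
      ((hasSum_centralBinom_mul_pow hx₀ hx).mul_left (2 * x))).congr_fun hrec)
  rwa [show D = 2 * x / (1 - 4 * x) * (√(1 - 4 * x))⁻¹ by
    rw [div_mul_eq_mul_div, eq_div_iff (by linarith)]; linarith] at hD

end CentralBinomSeries

section Triangles

variable {α : Type*} [AddCommMonoid α] [TopologicalSpace α]

lemma hasSum_ite_eq_iff_diag (f : ℕ × ℕ → α) {a : α} :
    HasSum (fun p : ℕ × ℕ => if p.1 = p.2 then f p else 0) a ↔ HasSum (fun n => f (n, n)) a := by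
  have hinj : Function.Injective fun n : ℕ => (n, n) := fun m n h => congrArg Prod.fst h
  rw [← hinj.hasSum_iff]
  · simp only [Function.comp_def, if_true]
  · rintro ⟨n, k⟩ hp
    rw [if_neg]
    rintro (rfl : n = k)
    exact hp ⟨n, rfl⟩

lemma hasSum_ite_lt_iff_swap (f : ℕ × ℕ → α) {a : α} :
    HasSum (fun p : ℕ × ℕ => if p.1 < p.2 then f p else 0) a ↔
      HasSum (fun p : ℕ × ℕ => if p.2 < p.1 then f p.swap else 0) a :=
  (Equiv.prodComm ℕ ℕ).hasSum_iff.symm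

lemma HasSum.sum_range_of_ite_lt [ContinuousAdd α] [RegularSpace α] {f : ℕ × ℕ → α} {a : α}
    (h : HasSum (fun p : ℕ × ℕ => if p.2 < p.1 then f p else 0) a) :
    HasSum (fun n => ∑ k ∈ range n, f (n, k)) a := by
  refine h.prod_fiberwise fun n => ?_
  have hrow := hasSum_sum_of_ne_finset_zero (L := SummationFilter.unconditional ℕ)
    (f := fun k => if k < n then f (n, k) else 0) (s := range n)
    fun k hk => if_neg (by simpa using hk)
  rwa [sum_congr rfl fun k hk => if_pos (mem_range.1 hk)] at hrow

end Triangles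

section LatticePaths

variable {x : ℝ}

noncomputable def pathWeight (x : ℝ) (p : ℕ × ℕ) : ℝ :=
  ((p.1 + p.2).choose p.2 : ℝ) * x ^ (p.1 + p.2)

lemma pathWeight_nonneg (hx₀ : 0 ≤ x) (p : ℕ × ℕ) : 0 ≤ pathWeight x p := by
  unfold pathWeight; positivity

lemma pathWeight_swap (p : ℕ × ℕ) : pathWeight x p.swap = pathWeight x p := by
  simp only [pathWeight, Prod.fst_swap, Prod.snd_swap]
  rw [← choose_symm_add, add_comm p.2 p.1]

lemma pathWeight_diag (n : ℕ) : pathWeight x (n, n) = centralBinom n * (x ^ 2) ^ n := by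
  simp only [pathWeight]
  rw [centralBinom_eq_two_mul_choose, ← pow_mul, two_mul]

lemma hasSum_pathWeight_row (n : ℕ) (hx₀ : 0 ≤ x) (hx : x < 1) :
    HasSum (fun k => pathWeight x (n, k)) (x ^ n / (1 - x) ^ (n + 1)) := by
  have := (hasSum_choose_mul_geometric_of_norm_lt_one n
    (by rwa [Real.norm_of_nonneg hx₀])).mul_left (x ^ n)
  rw [mul_one_div] at this
  refine this.congr_fun fun k => ?_
  simp only [pathWeight]
  rw [add_comm n k, choose_symm_add, pow_add]
  ring

lemma hasSum_succ_mul_pathWeight (hx₀ : 0 ≤ x) (hx : x < 1 / 2) :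
    HasSum (fun p : ℕ × ℕ => ((p.1 : ℝ) + 1) * pathWeight x p) ((1 - x) / (1 - 2 * x) ^ 2) := by
  have hrow (n : ℕ) := (hasSum_pathWeight_row n hx₀ (by linarith)).mul_left ((n : ℝ) + 1)
  have hcol : HasSum (fun n : ℕ => ((n : ℝ) + 1) * (x ^ n / (1 - x) ^ (n + 1)))
      ((1 - x) / (1 - 2 * x) ^ 2) := by
    have hy : ‖x / (1 - x)‖ < 1 := by
      rw [Real.norm_of_nonneg (div_nonneg hx₀ (by linarith)), div_lt_one (by linarith)]; linarith
    have h := (hasSum_choose_mul_geometric_of_norm_lt_one 1 hy).mul_left (1 - x)⁻¹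
    have h₁ : 1 - x ≠ 0 := by linarith
    have h₂ : 1 - 2 * x ≠ 0 := by linarith
    rw [show (1 - x)⁻¹ * (1 / (1 - x / (1 - x)) ^ (1 + 1)) = (1 - x) / (1 - 2 * x) ^ 2 by
      rw [show 1 - x / (1 - x) = (1 - 2 * x) / (1 - x) by field_simp; ring, div_pow, one_div_div]
      field_simp] at h
    refine h.congr_fun fun n => ?_
    rw [choose_one_right, div_pow, pow_succ]
    push_cast
    field_simp
  have hsum : Summable fun p : ℕ × ℕ => ((p.1 : ℝ) + 1) * pathWeight x p :=
    (summable_prod_of_nonneg fun p => mul_nonneg (by positivity) (pathWeight_nonneg hx₀ p)).2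
      ⟨fun n => (hrow n).summable, hcol.summable.congr fun n => (hrow n).tsum_eq.symm⟩
  rw [← (hsum.hasSum.prod_fiberwise hrow).unique hcol]
  exact hsum.hasSum

lemma sum_antidiagonal_lower_sub_mul_pathWeight (m : ℕ) :
    ∑ p ∈ antidiagonal m, (if p.2 < p.1 then ((p.1 : ℝ) - p.2) * pathWeight x p else 0)
      = m * (m - 1).choose ((m - 1) / 2) * x ^ m := by
  rw [← Nat.sum_antidiagonal_swap]
  simp only [Prod.fst_swap, Prod.snd_swap, pathWeight_swap]
  rw [Nat.sum_antidiagonal_eq_sum_range_succ_mk]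
  have hterm : ∀ k ∈ range (m + 1),
      (if k < m - k then (((m - k : ℕ) : ℝ) - k) * pathWeight x (k, m - k) else 0)
        = if 2 * k < m then ((m : ℝ) - 2 * k) * m.choose k * x ^ m else 0 := by
    intro k hk
    have hkm : k ≤ m := Nat.lt_succ_iff.1 (mem_range.1 hk)
    simp only [pathWeight, Nat.add_sub_cancel' hkm, choose_symm hkm, Nat.cast_sub hkm]
    by_cases h : 2 * k < m
    · rw [if_pos (by omega), if_pos h]; ring
    · rw [if_neg (by omega), if_neg h]
  rw [sum_congr rfl hterm, ← sum_filter]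
  rcases m with _ | M
  · simp
  rw [show (range (M + 1 + 1)).filter (fun k => 2 * k < M + 1) = range (M / 2 + 1) by
      ext k; simp only [mem_filter, mem_range]; omega,
    ← sum_mul]
  push_cast
  rw [sum_range_mul_sub_two_mul_choose]

lemma hasSum_mul_choose_half_mul_pow {B D : ℝ}
    (hB : HasSum (fun n : ℕ => (centralBinom n : ℝ) * (x ^ 2) ^ n) B)
    (hD : HasSum (fun n : ℕ => (n : ℝ) * centralBinom n * (x ^ 2) ^ n) D) :
    HasSum (fun m : ℕ => (m : ℝ) * (m - 1).choose ((m - 1) / 2) * x ^ m) (D + x * (2 * D + B)) := by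
  refine HasSum.even_add_odd (hD.congr_fun fun t => ?_)
    ((((hD.mul_left 2).add hB).mul_left x).congr_fun fun t => ?_)
  · rcases t with _ | s
    · simp
    rw [show 2 * (s + 1) - 1 = 2 * s + 1 by omega, show (2 * s + 1) / 2 = s by omega,
      centralBinom_succ_eq_two_mul_choose, ← pow_mul]
    push_cast
    ring
  · rw [Nat.add_sub_cancel, show 2 * t / 2 = t by omega, ← centralBinom_eq_two_mul_choose,
      pow_succ, pow_mul]
    push_cast
    ring

lemma hasSum_lower_sub_mul_pathWeight (hx₀ : 0 ≤ x) (hx : x < 1 / 2) {B D : ℝ}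
    (hB : HasSum (fun n : ℕ => (centralBinom n : ℝ) * (x ^ 2) ^ n) B)
    (hD : HasSum (fun n : ℕ => (n : ℝ) * centralBinom n * (x ^ 2) ^ n) D) :
    HasSum (fun p : ℕ × ℕ => if p.2 < p.1 then ((p.1 : ℝ) - p.2) * pathWeight x p else 0)
      (D + x * (2 * D + B)) := by
  set W := fun p : ℕ × ℕ => if p.2 < p.1 then ((p.1 : ℝ) - p.2) * pathWeight x p else 0
  have hW : Summable W := by
    refine (hasSum_succ_mul_pathWeight hx₀ hx).summable.of_nonneg_of_le (fun p => ?_) fun p => ?_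
      <;> have hw := pathWeight_nonneg hx₀ p <;> simp only [W] <;> split_ifs with h
    · exact mul_nonneg (sub_nonneg.2 (by exact_mod_cast h.le)) hw
    · exact le_rfl
    · exact mul_le_mul_of_nonneg_right (by linarith [p.2.cast_nonneg (α := ℝ)]) hw
    · positivity
  have hfib : HasSum (fun m => ∑ p ∈ antidiagonal m, W p) (∑' p, W p) :=
    ((HasAntidiagonal.sigmaAntidiagonalEquivProd.hasSum_iff).2 hW.hasSum).sigma fun m => by
      rw [← sum_finset_coe]; exact hasSum_fintype _
  rw [← (hfib.congr_fun fun m => (sum_antidiagonal_lower_sub_mul_pathWeight m).symm).unique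
    (hasSum_mul_choose_half_mul_pow hB hD)]
  exact hW.hasSum

lemma hasSum_succ_mul_pathWeight_diag {B D : ℝ}
    (hB : HasSum (fun n : ℕ => (centralBinom n : ℝ) * (x ^ 2) ^ n) B)
    (hD : HasSum (fun n : ℕ => (n : ℝ) * centralBinom n * (x ^ 2) ^ n) D) :
    HasSum (fun n : ℕ => ((n : ℝ) + 1) * pathWeight x (n, n)) (D + B) :=
  (hD.add hB).congr_fun fun n => by rw [pathWeight_diag]; ring

lemma hasSum_succ_mul_sum_range_pathWeight (hx₀ : 0 ≤ x) (hx : x < 1 / 2) {Δ E : ℝ}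
    (hdiag : HasSum (fun n : ℕ => ((n : ℝ) + 1) * pathWeight x (n, n)) Δ)
    (hE : HasSum (fun p : ℕ × ℕ => if p.2 < p.1 then ((p.1 : ℝ) - p.2) * pathWeight x p else 0)
      E) :
    HasSum (fun n : ℕ => ((n : ℝ) + 1) * ∑ k ∈ range n, pathWeight x (n, k))
      (((1 - x) / (1 - 2 * x) ^ 2 - Δ + E) / 2) := by
  set f : ℕ × ℕ → ℝ := fun p => ((p.1 : ℝ) + 1) * pathWeight x p
  have hT := hasSum_succ_mul_pathWeight hx₀ hx
  have hf₀ (p : ℕ × ℕ) : 0 ≤ f p := mul_nonneg (by positivity) (pathWeight_nonneg hx₀ p)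
  have hpart (P : ℕ × ℕ → Prop) [DecidablePred P] : Summable fun p => if P p then f p else 0 :=
    hT.summable.of_nonneg_of_le (fun p => by split_ifs; exacts [hf₀ p, le_rfl])
      fun p => by split_ifs; exacts [le_rfl, hf₀ p]
  obtain ⟨L, hL⟩ := hpart fun p => p.2 < p.1
  obtain ⟨U, hU⟩ := hpart fun p => p.1 < p.2
  have hsplit : L + U + Δ = (1 - x) / (1 - 2 * x) ^ 2 := by
    refine ((hL.add hU).add ((hasSum_ite_eq_iff_diag f).2 hdiag)).unique (hT.congr_fun fun p => ?_)
    rcases lt_trichotomy p.1 p.2 with h | h | h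
    · simp [f, h, h.ne, h.not_gt]
    · simp [f, h]
    · simp [f, h, h.ne', h.not_gt]
  have hdiff : L - U = E := by
    refine (hL.sub ((hasSum_ite_lt_iff_swap f).1 hU)).unique (hE.congr_fun fun p => ?_)
    simp only [f, Prod.fst_swap, pathWeight_swap]
    split_ifs
    · ring
    · ring
  rw [show ((1 - x) / (1 - 2 * x) ^ 2 - Δ + E) / 2 = L by linarith]
  simpa only [f, mul_sum] using hL.sum_range_of_ite_lt

end LatticePaths

lemma natCast_succ_mul_parkingGap_succ (d : ℕ) :
    ((d + 1 : ℕ) : ℝ) * parkingGap (d + 1)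
      = 2 / 3 * (((d : ℝ) + 1) * ∑ k ∈ range d, pathWeight (1 / 3) (d, k))
        + 1 / 3 * (((d : ℝ) + 1) * pathWeight (1 / 3) (d, d)) := by
  simp only [parkingGap, pathWeight, Nat.add_sub_cancel, show 2 * (d + 1) - 2 = d + d by omega,
    show 2 * (d + 1) - 1 = d + d + 1 by omega, pow_succ]
  push_cast
  ring

/-- The mean vertical gap `∑_{d≥1} d·q(d)` equals `2 + √5/5`. -/
theorem mean_parking_gap :
    HasSum (fun d : ℕ => ((d + 1 : ℕ) : ℝ) * parkingGap (d + 1)) (2 + Real.sqrt 5 / 5) := by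
  have hB := hasSum_centralBinom_mul_pow (x := 1 / 9) (by norm_num) (by norm_num)
  have hD := hasSum_mul_centralBinom_mul_pow (x := 1 / 9) (by norm_num) (by norm_num)
  rw [show (1 / 9 : ℝ) = (1 / 3) ^ 2 by norm_num] at hB hD
  have hdiag := hasSum_succ_mul_pathWeight_diag hB hD
  have hlower := hasSum_succ_mul_sum_range_pathWeight (by norm_num) (by norm_num) hdiag
    (hasSum_lower_sub_mul_pathWeight (by norm_num) (by norm_num) hB hD)
  have hmean := ((hlower.mul_left (2 / 3)).add (hdiag.mul_left (1 / 3))).congr_fun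
    natCast_succ_mul_parkingGap_succ
  have hsqrt : √(1 - 4 * ((1 : ℝ) / 3) ^ 2) = √5 / 3 := by
    rw [show 1 - 4 * ((1 : ℝ) / 3) ^ 2 = 5 / 3 ^ 2 by norm_num, Real.sqrt_div' _ (by norm_num),
      Real.sqrt_sq (by norm_num)]
  have h5 : √5 ^ 2 = 5 := Real.sq_sqrt (by norm_num)
  refine (hmean.summable.hasSum_iff).2 (hmean.tsum_eq.trans ?_)
  rw [hsqrt]
  field_simp
  linear_combination -15 * h5
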